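/- Let A be an (n+1) × (n+1) matrix with entries in a commutative semiring, and fix a column index i. Then the permanent expands along column i: per(A) = Σ_{j} A(j, i) · per(A^{(j,i)}), where A^{(j,i)} denotes the n × n matrix obtained from A by deleting row j and column i. Equivalently, the n+1 subsets {σ ∈ S_{n+1} : σ⁻¹(i) = j} for j = 1, …, n+1 partition the symmetric group S_{n+1}, and the total weight Σ_{σ : σ⁻¹(i) = j} ∏_k A(k, σ(k)) of each subset equals A(j, i) · per(A^{(j,i)}). -/
import Mathlib


/-- The permanent of a square matrix over a commutative semiring:
`per A = ∑ σ, ∏ k, A k (σ k)`. -/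
def perm {R : Type} [CommSemiring R] {m : ℕ} (A : Matrix (Fin m) (Fin m) R) : R :=
  ∑ σ : Equiv.Perm (Fin m), ∏ k, A k (σ k)

/-- Expansion of the permanent along a column `i`:
`per A = ∑ j, A j i * per (A with row j and column i deleted)`, and moreover the total
weight of the set of permutations `σ` with `σ⁻¹ i = j` equals
`A j i * per (A with row j and column i deleted)` (these sets partition the symmetric
group, which underlies AdaPart's column-based refinement). -/
theorem permanent_column_expansion
    {R : Type} [CommSemiring R] {n : ℕ}
    (A : Matrix (Fin (n + 1)) (Fin (n + 1)) R) (i : Fin (n + 1)) :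
    (perm A = ∑ j : Fin (n + 1),
        A j i * perm (A.submatrix j.succAbove i.succAbove)) ∧
      (∀ j : Fin (n + 1),
        ∑ σ ∈ Finset.univ.filter (fun σ : Equiv.Perm (Fin (n + 1)) => σ.symm i = j),
            ∏ k, A k (σ k)
          = A j i * perm (A.submatrix j.succAbove i.succAbove)) := by
  have key : ∀ j : Fin (n + 1),
      ∑ σ ∈ Finset.univ.filter (fun σ : Equiv.Perm (Fin (n + 1)) => σ.symm i = j),
          ∏ k, A k (σ k)
        = A j i * perm (A.submatrix j.succAbove i.succAbove) := by
    intro j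
    set D : Equiv.Perm (Fin (n + 1)) → Equiv.Perm (Fin n) := fun σ =>
      ((finSuccEquiv' j).symm.trans (σ.trans (finSuccEquiv' i))).removeNone with hD
    set E : Equiv.Perm (Fin n) → Equiv.Perm (Fin (n + 1)) := fun τ =>
      (finSuccEquiv' j).trans ((Equiv.optionCongr τ).trans (finSuccEquiv' i).symm) with hE
    have hstep : ∀ σ : Equiv.Perm (Fin (n + 1)), σ j = i →
        ∀ k : Fin n, σ (j.succAbove k) = i.succAbove (D σ k) := by
      intro σ hσ k
      have h1 : some (D σ k) = ((finSuccEquiv' j).symm.trans (σ.trans (finSuccEquiv' i))) (some k) := by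
        refine Equiv.removeNone_some _ ?_
        simp only [Equiv.trans_apply, finSuccEquiv'_symm_some]
        rcases eq_or_ne (σ (j.succAbove k)) i with h | h
        · exact absurd (σ.injective (h.trans hσ.symm)) (Fin.succAbove_ne j k)
        · obtain ⟨m, hm⟩ := Fin.exists_succAbove_eq h
          exact ⟨m, by rw [← hm]; simp⟩
      simp only [Equiv.trans_apply, finSuccEquiv'_symm_some] at h1
      have h2 := congrArg (finSuccEquiv' i).symm h1
      simpa [finSuccEquiv'_symm_some] using h2.symm
    have hEτ : ∀ τ : Equiv.Perm (Fin n), (E τ).symm i = j := by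
      intro τ
      rw [Equiv.symm_apply_eq]
      simp [hE]
    rw [perm, Finset.mul_sum]
    refine Finset.sum_nbij' D E ?_ ?_ ?_ ?_ ?_
    · intro a _; exact Finset.mem_univ _
    · intro τ _
      simp only [Finset.mem_filter, Finset.mem_univ, true_and]
      exact hEτ τ
    · intro σ hσ
      simp only [Finset.mem_filter, Finset.mem_univ, true_and] at hσ
      have hσj : σ j = i := by rw [← hσ]; simp
      ext x
      rcases eq_or_ne x j with rfl | hx
      · simp [hE, hσj]
      · obtain ⟨k, rfl⟩ := Fin.exists_succAbove_eq hx
        simp [hE, hstep σ hσj k]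
    · intro τ _
      have : D (E τ) = τ := by
        have : (finSuccEquiv' j).symm.trans ((E τ).trans (finSuccEquiv' i))
            = Equiv.optionCongr τ := by
          ext x; simp [hE]
        rw [hD]; simp only [this, Equiv.removeNone_optionCongr]
      exact this
    · intro σ hσ
      simp only [Finset.mem_filter, Finset.mem_univ, true_and] at hσ
      have hσj : σ j = i := by rw [← hσ]; simp
      rw [Fin.prod_univ_succAbove (fun k => A k (σ k)) j, hσj]
      congr 1
      exact Finset.prod_congr rfl fun k _ => by rw [hstep σ hσj k]; rfl
  refine ⟨?_, key⟩
  rw [perm, ← Finset.sum_fiberwise Finset.univ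
    (fun σ : Equiv.Perm (Fin (n + 1)) => σ.symm i) (fun σ => ∏ k, A k (σ k))]
  exact Finset.sum_congr rfl fun j _ => key j
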